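/- Fix u > 0, r > 0, L > 0 with |L − r| < u < L + r, and set a = (L² + r² − u²)/(2u), b = (2rL)/(2u) = rL/u, c = √(b² − a²). For small x > 0 define φ(x) = arccos(1 − (1/(a²+c²))·[c² + a·x + (a/(2u))·x² − c·√(c² + 2a·x + (a/u)·x² − (x + x²/(2u))²)]). Then lim_{x→0⁺} φ(x)/x = 1/c = 2u/√((u² − (L−r)²)·((L+r)² − u²)). -/

import Mathlib

/-!
With `y = x + x² / (2u)` and `b² = a² + c²`, `φ(x)` is the angle at the origin between the
points `(a, c)` and `(a - y, √(c² + 2ay - y²))` of the circle of radius `b`. Rationalising,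
`1 - cos φ = y² / D(y)` with `D(y) = c² + ay + c √(c² + 2ay - y²) → 2c²`. Since
`arccos (1 - s) ~ √(2s)` as `s → 0⁺` (from `arccos (1 - 2t²) = 2 arcsin t`), we get
`φ(x) ~ y √(2 / D(y)) ~ x / c`.
-/

open Real Filter Topology

namespace Real

lemma arccos_one_sub_two_mul_sq {t : ℝ} (h₀ : 0 ≤ t) (h₁ : t ≤ 1) :
    arccos (1 - 2 * t ^ 2) = 2 * arcsin t :=
  arccos_eq_of_eq_cos (by linarith [arcsin_nonneg.2 h₀]) (by linarith [arcsin_le_pi_div_two t])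
    (by rw [cos_two_mul_eq_one_sub, sin_arcsin (by linarith) h₁])

lemma tendsto_arcsin_div_self_nhdsGT : Tendsto (fun t => arcsin t / t) (𝓝[>] 0) (𝓝 1) := by
  have h : HasDerivAt arcsin 1 0 := by
    simpa using hasDerivAt_arcsin (x := 0) (by norm_num) (by norm_num)
  simpa [div_eq_inv_mul] using h.tendsto_slope_zero_right

lemma tendsto_arccos_one_sub_div_sqrt :
    Tendsto (fun s => arccos (1 - s) / √(2 * s)) (𝓝[>] 0) (𝓝 1) := by
  have ht : Tendsto (fun s : ℝ => √(s / 2)) (𝓝[>] 0) (𝓝[>] 0) := by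
    refine tendsto_nhdsWithin_iff.2 ⟨?_, ?_⟩
    · simpa using ((continuous_id.div_const 2).sqrt.tendsto 0).mono_left nhdsWithin_le_nhds
    · filter_upwards [self_mem_nhdsWithin] with s (hs : 0 < s)
      exact sqrt_pos.2 (by positivity)
  refine (tendsto_arcsin_div_self_nhdsGT.comp ht).congr' ?_
  filter_upwards [Ioo_mem_nhdsGT (by norm_num : (0 : ℝ) < 2)] with s ⟨hs₀, hs₂⟩
  have hsq : √(s / 2) ^ 2 = s / 2 := sq_sqrt (by positivity)
  have hle : √(s / 2) ≤ 1 := sqrt_le_one.2 (by linarith)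
  have hnum : arccos (1 - s) = 2 * arcsin √(s / 2) := by
    rw [← arccos_one_sub_two_mul_sq (sqrt_nonneg _) hle, hsq, mul_div_cancel₀ _ two_ne_zero]
  have hden : √(2 * s) = 2 * √(s / 2) := by
    rw [show 2 * s = 2 ^ 2 * (s / 2) by ring, sqrt_mul (by norm_num), sqrt_sq (by norm_num)]
  simp only [Function.comp, hnum, hden]
  rw [mul_div_mul_left _ _ two_ne_zero]

end Real

/-- The angle at the origin between the points `(a, c)` and `(a - y, √(c² + 2ay - y²))`,
both on the circle of radius `√(a² + c²)`. -/
noncomputable def angularWidth (a c y : ℝ) : ℝ :=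
  arccos (1 - 1 / (a ^ 2 + c ^ 2) * (c ^ 2 + a * y - c * √(c ^ 2 + 2 * a * y - y ^ 2)))

lemma angularWidth_eq_arccos_one_sub_sq_div {a c y : ℝ} (hc : 0 < c) (hS : 0 ≤ c ^ 2 + 2 * a * y - y ^ 2)
    (hD : c ^ 2 + a * y + c * √(c ^ 2 + 2 * a * y - y ^ 2) ≠ 0) :
    angularWidth a c y = arccos (1 - y ^ 2 / (c ^ 2 + a * y + c * √(c ^ 2 + 2 * a * y - y ^ 2))) := by
  have hsq := sq_sqrt hS
  have hb : a ^ 2 + c ^ 2 ≠ 0 := by positivity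
  unfold angularWidth
  rw [one_div_mul_eq_div]
  congr 2
  rw [div_eq_div_iff hb hD]
  linear_combination (-c ^ 2) * hsq

lemma tendsto_angularWidth_div_self (a : ℝ) {c : ℝ} (hc : 0 < c) :
    Tendsto (fun y => angularWidth a c y / y) (𝓝[>] 0) (𝓝 (1 / c)) := by
  set D : ℝ → ℝ := fun y => c ^ 2 + a * y + c * √(c ^ 2 + 2 * a * y - y ^ 2) with hD_def
  have hcont : Continuous fun y : ℝ => c ^ 2 + 2 * a * y - y ^ 2 := by fun_prop
  have hS : Tendsto (fun y : ℝ => c ^ 2 + 2 * a * y - y ^ 2) (𝓝[>] 0) (𝓝 (c ^ 2)) := by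
    simpa using (hcont.tendsto 0).mono_left nhdsWithin_le_nhds
  have hD : Tendsto D (𝓝[>] 0) (𝓝 (2 * c ^ 2)) := by
    have hDc : Continuous D := by simp only [hD_def]; fun_prop
    have hD0 : D 0 = 2 * c ^ 2 := by simp only [hD_def]; simp [sqrt_sq hc.le]; ring
    exact hD0 ▸ (hDc.tendsto 0).mono_left nhdsWithin_le_nhds
  have hpos : ∀ᶠ y in 𝓝[>] (0 : ℝ), 0 < y ∧ 0 < c ^ 2 + 2 * a * y - y ^ 2 ∧ 0 < D y := by
    filter_upwards [self_mem_nhdsWithin, hS.eventually (eventually_gt_nhds (by positivity)),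
      hD.eventually (eventually_gt_nhds (by positivity))] with y hy hSy hDy
    exact ⟨hy, hSy, hDy⟩
  have hs : Tendsto (fun y => y ^ 2 / D y) (𝓝[>] 0) (𝓝[>] 0) := by
    refine tendsto_nhdsWithin_iff.2 ⟨?_, ?_⟩
    · have hy2 : Tendsto (fun y : ℝ => y ^ 2) (𝓝[>] 0) (𝓝 0) := by
        simpa using ((continuous_pow 2).tendsto (0 : ℝ)).mono_left nhdsWithin_le_nhds
      have h := hy2.div hD (by positivity)
      rwa [zero_div] at h
    · filter_upwards [hpos] with y hy
      exact div_pos (pow_pos hy.1 2) hy.2.2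
  have hscale : Tendsto (fun y => √(2 / D y)) (𝓝[>] 0) (𝓝 (1 / c)) := by
    have h := ((tendsto_const_nhds (x := (2 : ℝ))).div hD (by positivity : (2 * c ^ 2 : ℝ) ≠ 0)).sqrt
    rwa [show (2 : ℝ) / (2 * c ^ 2) = (1 / c) ^ 2 by field_simp,
      sqrt_sq (by positivity)] at h
  have hlim := (tendsto_arccos_one_sub_div_sqrt.comp hs).mul hscale
  rw [one_mul] at hlim
  refine hlim.congr' ?_
  filter_upwards [hpos] with y ⟨hy, hSy, hDy⟩
  have hsqrt : √(2 * (y ^ 2 / D y)) = y * √(2 / D y) := by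
    rw [show 2 * (y ^ 2 / D y) = y ^ 2 * (2 / D y) by ring, sqrt_mul (by positivity),
      sqrt_sq hy.le]
  have hw : angularWidth a c y = arccos (1 - y ^ 2 / D y) := angularWidth_eq_arccos_one_sub_sq_div hc hSy.le hDy.ne'
  rw [Function.comp_apply, hw, hsqrt]
  field_simp

/-- Heron's formula: `b² - a²` is the squared height onto the side `u` of the triangle with
sides `u`, `r`, `L`. -/
lemma sq_sub_sq_eq_heron {u : ℝ} (hu : u ≠ 0) (r L : ℝ) :
    (r * L / u) ^ 2 - ((L ^ 2 + r ^ 2 - u ^ 2) / (2 * u)) ^ 2 =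
      (u ^ 2 - (L - r) ^ 2) * ((L + r) ^ 2 - u ^ 2) / (2 * u) ^ 2 := by
  field_simp
  ring

theorem angular_width_limit_general
    (u r L : ℝ) (hu : 0 < u)
    (htri : |L - r| < u ∧ u < L + r)
    (a b c : ℝ)
    (ha : a = (L ^ 2 + r ^ 2 - u ^ 2) / (2 * u))
    (hb : b = r * L / u)
    (hc : c = Real.sqrt (b ^ 2 - a ^ 2))
    (φ : ℝ → ℝ)
    (hφ : φ = fun x => Real.arccos (1 - (1 / (a ^ 2 + c ^ 2)) *
      (c ^ 2 + a * x + (a / (2 * u)) * x ^ 2 -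
        c * Real.sqrt (c ^ 2 + 2 * a * x + (a / u) * x ^ 2 -
          (x + x ^ 2 / (2 * u)) ^ 2)))) :
    Tendsto (fun x => φ x / x) (nhdsWithin 0 (Set.Ioi 0)) (𝓝 (1 / c)) ∧
    1 / c = 2 * u / Real.sqrt ((u ^ 2 - (L - r) ^ 2) * ((L + r) ^ 2 - u ^ 2)) := by
  obtain ⟨hlo, hhi⟩ := abs_lt.1 htri.1
  have hP : 0 < (u ^ 2 - (L - r) ^ 2) * ((L + r) ^ 2 - u ^ 2) :=
    mul_pos (by nlinarith) (by nlinarith [htri.2])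
  have hc_eq : c = √((u ^ 2 - (L - r) ^ 2) * ((L + r) ^ 2 - u ^ 2)) / (2 * u) := by
    rw [hc, ha, hb, sq_sub_sq_eq_heron hu.ne', sqrt_div' _ (sq_nonneg _), sqrt_sq (by positivity)]
  have hc_pos : 0 < c := by rw [hc_eq]; positivity
  refine ⟨?_, by rw [hc_eq, one_div_div]⟩
  have hφ_eq : φ = fun x => angularWidth a c (x + x ^ 2 / (2 * u)) := by
    rw [hφ]; funext x; unfold angularWidth; ring_nf
  have hy : Tendsto (fun x : ℝ => x + x ^ 2 / (2 * u)) (𝓝[>] 0) (𝓝[>] 0) := by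
    refine tendsto_nhdsWithin_iff.2 ⟨?_, ?_⟩
    · have h : Continuous fun x : ℝ => x + x ^ 2 / (2 * u) := by fun_prop
      simpa using (h.tendsto 0).mono_left nhdsWithin_le_nhds
    · filter_upwards [self_mem_nhdsWithin] with x (hx : 0 < x)
      show 0 < x + x ^ 2 / (2 * u)
      positivity
  have hratio : Tendsto (fun x : ℝ => 1 + x / (2 * u)) (𝓝[>] 0) (𝓝 1) := by
    have h : Continuous fun x : ℝ => 1 + x / (2 * u) := by fun_prop
    simpa using (h.tendsto 0).mono_left nhdsWithin_le_nhds
  have hlim := ((tendsto_angularWidth_div_self a hc_pos).comp hy).mul hratio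
  rw [mul_one] at hlim
  refine hlim.congr' ?_
  filter_upwards [self_mem_nhdsWithin] with x (hx : 0 < x)
  rw [Function.comp_apply, hφ_eq]
  field_simp

/-- The key limit of the proof of Lemma 2: the angular width `φ(x)` of the
intersection of a circle of radius `L` (centered at distance `r` from the
annulus center) with an annulus of radii `u` and `u + x` satisfies
`φ(x)/x → 1/c = 2u/√((u² − (L−r)²)((L+r)² − u²))` as `x → 0⁺`. -/
theorem angular_width_limit
    (u r L : ℝ) (hu : 0 < u) (hr : 0 < r) (hL : 0 < L)
    (htri : |L - r| < u ∧ u < L + r)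
    (a b c : ℝ)
    (ha : a = (L ^ 2 + r ^ 2 - u ^ 2) / (2 * u))
    (hb : b = r * L / u)
    (hc : c = Real.sqrt (b ^ 2 - a ^ 2))
    (φ : ℝ → ℝ)
    (hφ : φ = fun x => Real.arccos (1 - (1 / (a ^ 2 + c ^ 2)) *
      (c ^ 2 + a * x + (a / (2 * u)) * x ^ 2 -
        c * Real.sqrt (c ^ 2 + 2 * a * x + (a / u) * x ^ 2 -
          (x + x ^ 2 / (2 * u)) ^ 2)))) :
    Tendsto (fun x => φ x / x) (nhdsWithin 0 (Set.Ioi 0)) (𝓝 (1 / c)) ∧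
    1 / c = 2 * u / Real.sqrt ((u ^ 2 - (L - r) ^ 2) * ((L + r) ^ 2 - u ^ 2)) :=
  angular_width_limit_general u r L hu htri a b c ha hb hc φ hφ
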